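/- arXiv:2212.13389 — 3 statements merged into one kernel-verified Lean document; each statement's English description precedes it below -/
import Mathlib

section
/- For x, y, z ∈ ℝ^n, the squared Frobenius norm of 6·A6(x,y,z) satisfies ‖6·A6(x,y,z)‖² = Σᵢ xᵢ²(6‖y‖²‖z‖² − 6⟨y,z⟩² + 12 yᵢzᵢ⟨y,z⟩ − 6yᵢ²‖z‖² − 6zᵢ²‖y‖²) + Σ_{i<j} xᵢxⱼ(12(yᵢzⱼ + zᵢyⱼ)⟨y,z⟩ − 12yᵢyⱼ‖z‖² − 12zᵢzⱼ‖y‖²). -/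
lemma tri {n : ℕ} (f g h : Fin n → ℝ) :
    ∑ i, ∑ j, ∑ k, f i * g j * h k = (∑ i, f i) * (∑ i, g i) * (∑ i, h i) := by
  simp only [← Finset.mul_sum, ← Finset.sum_mul]

lemma two' {n : ℕ} (f g : Fin n → ℝ) :
    ∑ i, ∑ j, f i * g j = (∑ i, f i) * (∑ i, g i) := by
  simp only [← Finset.mul_sum, ← Finset.sum_mul]

lemma offdiag {n : ℕ} (F : Fin n → Fin n → ℝ) (hsymm : ∀ i j, F i j = F j i) :
    2 * (∑ i, ∑ j, if i < j then F i j else 0) = (∑ i, ∑ j, F i j) - ∑ i, F i i := by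
  have h1 : (∑ i, ∑ j, if i < j then F i j else 0) = ∑ i, ∑ j, if j < i then F i j else 0 := by
    rw [Finset.sum_comm]
    exact Finset.sum_congr rfl fun i _ => Finset.sum_congr rfl fun j _ => by
      by_cases h : j < i <;> simp [h, hsymm i j]
  have h2 : ∀ i j : Fin n, ((if i < j then F i j else 0) + (if j < i then F i j else 0))
      = F i j - (if i = j then F i j else 0) := by
    intro i j
    rcases lt_trichotomy i j with h | h | h
    · simp [h, not_lt_of_gt h, h.ne]
    · simp [h]
    · simp [h, not_lt_of_gt h, h.ne']
  calc 2 * (∑ i, ∑ j, if i < j then F i j else 0)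
      = (∑ i, ∑ j, if i < j then F i j else 0) + ∑ i, ∑ j, (if j < i then F i j else 0) := by
        rw [← h1]; ring
    _ = ∑ i, ∑ j, ((if i < j then F i j else 0) + (if j < i then F i j else 0)) := by
        rw [← Finset.sum_add_distrib]
        exact Finset.sum_congr rfl fun i _ => (Finset.sum_add_distrib).symm
    _ = ∑ i, ∑ j, (F i j - (if i = j then F i j else 0)) := by simp_rw [h2]
    _ = (∑ i, ∑ j, F i j) - ∑ i, ∑ j, (if i = j then F i j else 0) := by
        simp [Finset.sum_sub_distrib]
    _ = _ := by simp [Finset.sum_ite_eq]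

noncomputable def A6 {n : ℕ} (x y z : Fin n → ℝ) : Fin n → Fin n → Fin n → ℝ :=
  fun i j k => (1/6 : ℝ) *
    (x i * y j * z k + y i * z j * x k + z i * x j * y k
      - x i * z j * y k - y i * x j * z k - z i * y j * x k)

lemma A6_L {n : ℕ} (x y z : Fin n → ℝ) :
    ∑ i, ∑ j, ∑ k, 6 * A6 x y z i j k * (6 * A6 x y z i j k) =
      6 * (∑ i, x i * x i) * ((∑ i, y i * y i) * (∑ i, z i * z i))
      + 12 * ((∑ i, x i * y i) * ((∑ i, x i * z i) * (∑ i, y i * z i)))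
      - 6 * (∑ i, x i * x i) * ((∑ i, y i * z i) * (∑ i, y i * z i))
      - 6 * ((∑ i, x i * y i) * (∑ i, x i * y i)) * (∑ i, z i * z i)
      - 6 * ((∑ i, x i * z i) * (∑ i, x i * z i)) * (∑ i, y i * y i) := by
  calc ∑ i, ∑ j, ∑ k, 6 * A6 x y z i j k * (6 * A6 x y z i j k)
      = ∑ i, ∑ j, ∑ k,
        ((x i * x i) * (y j * y j) * (z k * z k)
        + (y i * y i) * (z j * z j) * (x k * x k)
        + (z i * z i) * (x j * x j) * (y k * y k)
        + (x i * x i) * (z j * z j) * (y k * y k)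
        + (y i * y i) * (x j * x j) * (z k * z k)
        + (z i * z i) * (y j * y j) * (x k * x k)
        + (2 * (x i * y i)) * (y j * z j) * (x k * z k)
        + (2 * (x i * z i)) * (x j * y j) * (y k * z k)
        + (2 * (y i * z i)) * (x j * z j) * (x k * y k)
        + (2 * (x i * y i)) * (x j * z j) * (y k * z k)
        + (2 * (x i * z i)) * (y j * z j) * (x k * y k)
        + (2 * (y i * z i)) * (x j * y j) * (x k * z k)
        - (2 * (x i * x i)) * (y j * z j) * (y k * z k)
        - (2 * (x i * y i)) * (x j * y j) * (z k * z k)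
        - (2 * (x i * z i)) * (y j * y j) * (x k * z k)
        - (2 * (x i * y i)) * (z j * z j) * (x k * y k)
        - (2 * (y i * y i)) * (x j * z j) * (x k * z k)
        - (2 * (y i * z i)) * (y j * z j) * (x k * x k)
        - (2 * (x i * z i)) * (x j * z j) * (y k * y k)
        - (2 * (y i * z i)) * (x j * x j) * (y k * z k)
        - (2 * (z i * z i)) * (x j * y j) * (x k * y k)) := by
        refine Finset.sum_congr rfl fun i _ => Finset.sum_congr rfl fun j _ =>
          Finset.sum_congr rfl fun k _ => ?_
        simp only [A6]; ring
    _ = _ := by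
        simp only [Finset.sum_add_distrib, Finset.sum_sub_distrib, tri]
        simp only [← Finset.mul_sum]
        ring

theorem A6_norm_sq_formula {n : ℕ} (x y z : Fin n → ℝ) :
    ∑ i, ∑ j, ∑ k, (6 * A6 x y z i j k) ^ 2 =
      (∑ i, (x i) ^ 2 *
        (6 * (∑ j, (y j) ^ 2) * (∑ k, (z k) ^ 2) - 6 * (∑ j, y j * z j) ^ 2
          + 12 * y i * z i * (∑ j, y j * z j)
          - 6 * (y i) ^ 2 * (∑ k, (z k) ^ 2) - 6 * (z i) ^ 2 * (∑ j, (y j) ^ 2)))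
      + ∑ i, ∑ j, (if i < j then
          x i * x j *
            (12 * (y i * z j + z i * y j) * (∑ k, y k * z k)
              - 12 * y i * y j * (∑ k, (z k) ^ 2) - 12 * z i * z j * (∑ k, (y k) ^ 2))
        else 0) := by
  simp only [pow_two]
  have hL := A6_L x y z
  -- diagonal sum
  have hD : (∑ i, x i * x i *
        ((6 * ∑ k, y k * y k) * (∑ k, z k * z k)
          - 6 * ((∑ k, y k * z k) * ∑ k, y k * z k)
          + 12 * y i * z i * (∑ k, y k * z k)
          - 6 * (y i * y i) * (∑ k, z k * z k)
          - 6 * (z i * z i) * (∑ k, y k * y k)))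
      = 6 * (∑ i, x i * x i) * ((∑ i, y i * y i) * (∑ i, z i * z i))
        - 6 * (∑ i, x i * x i) * ((∑ i, y i * z i) * (∑ i, y i * z i))
        + 12 * (∑ i, y i * z i) * (∑ i, x i * x i * (y i * z i))
        - 6 * (∑ i, z i * z i) * (∑ i, x i * x i * (y i * y i))
        - 6 * (∑ i, y i * y i) * (∑ i, x i * x i * (z i * z i)) := by
    calc (∑ i, x i * x i *
        ((6 * ∑ k, y k * y k) * (∑ k, z k * z k)
          - 6 * ((∑ k, y k * z k) * ∑ k, y k * z k)
          + 12 * y i * z i * (∑ k, y k * z k)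
          - 6 * (y i * y i) * (∑ k, z k * z k)
          - 6 * (z i * z i) * (∑ k, y k * y k)))
        = ∑ i,
          ((6 * (∑ k, y k * y k) * (∑ k, z k * z k)
            - 6 * ((∑ k, y k * z k) * (∑ k, y k * z k))) * (x i * x i)
          + (12 * (∑ k, y k * z k)) * (x i * x i * (y i * z i))
          - (6 * (∑ k, z k * z k)) * (x i * x i * (y i * y i))
          - (6 * (∑ k, y k * y k)) * (x i * x i * (z i * z i))) := by
          exact Finset.sum_congr rfl fun i _ => by ring
      _ = _ := by
          simp only [Finset.sum_add_distrib, Finset.sum_sub_distrib, ← Finset.mul_sum]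
          ring
  -- off-diagonal part
  have hoff := offdiag (fun i j =>
      x i * x j *
        (12 * (y i * z j + z i * y j) * (∑ k, y k * z k)
          - 12 * y i * y j * (∑ k, z k * z k) - 12 * z i * z j * (∑ k, y k * y k)))
      (fun i j => by ring)
  have hA : (∑ i, ∑ j, x i * x j *
        (12 * (y i * z j + z i * y j) * (∑ k, y k * z k)
          - 12 * y i * y j * (∑ k, z k * z k) - 12 * z i * z j * (∑ k, y k * y k)))
      = 24 * ((∑ i, x i * y i) * (∑ i, x i * z i)) * (∑ i, y i * z i)
        - 12 * ((∑ i, x i * y i) * (∑ i, x i * y i)) * (∑ i, z i * z i)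
        - 12 * ((∑ i, x i * z i) * (∑ i, x i * z i)) * (∑ i, y i * y i) := by
    calc (∑ i, ∑ j, x i * x j *
        (12 * (y i * z j + z i * y j) * (∑ k, y k * z k)
          - 12 * y i * y j * (∑ k, z k * z k) - 12 * z i * z j * (∑ k, y k * y k)))
        = ∑ i, ∑ j,
          (((12 * (∑ k, y k * z k)) * (x i * y i)) * (x j * z j)
          + ((12 * (∑ k, y k * z k)) * (x i * z i)) * (x j * y j)
          - ((12 * (∑ k, z k * z k)) * (x i * y i)) * (x j * y j)
          - ((12 * (∑ k, y k * y k)) * (x i * z i)) * (x j * z j)) := by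
          exact Finset.sum_congr rfl fun i _ => Finset.sum_congr rfl fun j _ => by ring
      _ = _ := by
          simp only [Finset.sum_add_distrib, Finset.sum_sub_distrib, two']
          simp only [← Finset.mul_sum]
          ring
  have hB : (∑ i, x i * x i *
        (12 * (y i * z i + z i * y i) * (∑ k, y k * z k)
          - 12 * y i * y i * (∑ k, z k * z k) - 12 * z i * z i * (∑ k, y k * y k)))
      = 24 * (∑ i, y i * z i) * (∑ i, x i * x i * (y i * z i))
        - 12 * (∑ i, z i * z i) * (∑ i, x i * x i * (y i * y i))
        - 12 * (∑ i, y i * y i) * (∑ i, x i * x i * (z i * z i)) := by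
    calc (∑ i, x i * x i *
        (12 * (y i * z i + z i * y i) * (∑ k, y k * z k)
          - 12 * y i * y i * (∑ k, z k * z k) - 12 * z i * z i * (∑ k, y k * y k)))
        = ∑ i, ((24 * (∑ k, y k * z k)) * (x i * x i * (y i * z i))
          - (12 * (∑ k, z k * z k)) * (x i * x i * (y i * y i))
          - (12 * (∑ k, y k * y k)) * (x i * x i * (z i * z i))) := by
          exact Finset.sum_congr rfl fun i _ => by ring
      _ = _ := by
          simp only [Finset.sum_sub_distrib, ← Finset.mul_sum]
          try ring
  rw [hA, hB] at hoff
  rw [hL, hD]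
  linarith [hoff]
end

section
/- For y, z ∈ ℝ^n, the matrix Q = 2((‖y‖²‖z‖² − ⟨y,z⟩²)I_n + (yzᵀ − zyᵀ)²) is symmetric positive semidefinite. -/
open Matrix

noncomputable def Qmat {n : ℕ} (y z : Fin n → ℝ) : Matrix (Fin n) (Fin n) ℝ :=
  (2 : ℝ) • ((((y ⬝ᵥ y) * (z ⬝ᵥ z) - (y ⬝ᵥ z) ^ 2) • (1 : Matrix (Fin n) (Fin n) ℝ))
    + (Matrix.vecMulVec y z - Matrix.vecMulVec z y) ^ 2)

/-!
Write `A = yzᵀ - zyᵀ`. It is skew-symmetric, so `A²` and hence `Q` are symmetric, and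
`A x = ⟨z,x⟩ y - ⟨y,x⟩ z`. Expanding `⟨x, (G I + A²) x⟩` with `G = ‖y‖²‖z‖² - ⟨y,z⟩²` gives exactly
the 3 × 3 Gram determinant of `(y, z, x)`, which is nonnegative because Gram matrices are
positive semidefinite.
-/

namespace Matrix

theorem transpose_vecMulVec_sub_vecMulVec {ι R : Type*} [CommRing R] (y z : ι → R) :
    (vecMulVec y z - vecMulVec z y)ᵀ = -(vecMulVec y z - vecMulVec z y) := by
  rw [transpose_sub, transpose_vecMulVec, transpose_vecMulVec, neg_sub]

variable {ι : Type*} [Fintype ι]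

theorem dotProduct_mulVec_eq_det_gram {R : Type*} [CommRing R] [DecidableEq ι] (y z x : ι → R) :
    x ⬝ᵥ ((((y ⬝ᵥ y) * (z ⬝ᵥ z) - (y ⬝ᵥ z) ^ 2) • 1 + (vecMulVec y z - vecMulVec z y) ^ 2) *ᵥ x)
      = (of fun i j => ![y, z, x] i ⬝ᵥ ![y, z, x] j).det := by
  have hA : ∀ w, (vecMulVec y z - vecMulVec z y) *ᵥ w = (z ⬝ᵥ w) • y - (y ⬝ᵥ w) • z := fun w => by
    simp only [sub_mulVec, vecMulVec_mulVec, op_smul_eq_smul]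
  rw [add_mulVec, smul_mulVec, one_mulVec, pow_two (vecMulVec y z - _), ← mulVec_mulVec,
    hA, hA, det_fin_three]
  simp only [of_apply, cons_val_zero, cons_val_one, cons_val_two, head_cons, tail_cons,
    dotProduct_add, dotProduct_sub, dotProduct_smul, smul_eq_mul]
  simp only [dotProduct_comm x, dotProduct_comm z y]
  ring

theorem posSemidef_dotProduct_gram {m : Type*} [Fintype m] (v : m → ι → ℝ) :
    (of fun i j => v i ⬝ᵥ v j).PosSemidef := by
  convert posSemidef_self_mul_conjTranspose (of v) using 1
  ext i j
  rfl

end Matrix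

theorem Qmat_posSemidef {n : ℕ} (y z : Fin n → ℝ) :
    (Qmat y z).IsSymm ∧ (Qmat y z).PosSemidef := by
  have hsymm : (Qmat y z).IsSymm := by
    rw [IsSymm, Qmat, transpose_smul, transpose_add, transpose_smul, transpose_one,
      transpose_pow, transpose_vecMulVec_sub_vecMulVec, neg_sq]
  refine ⟨hsymm, .of_dotProduct_mulVec_nonneg hsymm fun x => ?_⟩
  rw [star_trivial, Qmat, smul_mulVec, dotProduct_smul, dotProduct_mulVec_eq_det_gram, smul_eq_mul]
  exact mul_nonneg zero_le_two (posSemidef_dotProduct_gram _).det_nonneg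
end

section
/- Let C ∈ ℝ^{n×n×m} be antisymmetric in modes one and two. Then sup over matrices U ∈ ℝ^{n×2} with orthonormal columns and unit vectors z ∈ ℝ^m of ‖C ×₁ Uᵀ ×₂ Uᵀ ×₃ zᵀ‖ equals √2 times the sup over unit vectors v₁, v₂ ∈ ℝ^n and unit z ∈ ℝ^m of |C ×₁ v₁ᵀ ×₂ v₂ᵀ ×₃ zᵀ|. -/
open Matrix

/-- Compression of an order-3 tensor in modes 1 and 2 by `U` and in mode 3 by `z`. -/
noncomputable def compress {n m : ℕ} (C : Fin n → Fin n → Fin m → ℝ)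
    (U : Matrix (Fin n) (Fin 2) ℝ) (z : Fin m → ℝ) : Matrix (Fin 2) (Fin 2) ℝ :=
  fun p q => ∑ i, ∑ j, ∑ k, C i j k * U i p * U j q * z k

/-- Full contraction of an order-3 tensor with three vectors. -/
noncomputable def contract {n m : ℕ} (C : Fin n → Fin n → Fin m → ℝ)
    (v₁ v₂ : Fin n → ℝ) (z : Fin m → ℝ) : ℝ :=
  ∑ i, ∑ j, ∑ k, C i j k * v₁ i * v₂ j * z k

lemma contract_swap {n m : ℕ} (C : Fin n → Fin n → Fin m → ℝ)
    (hC : ∀ (i j : Fin n) (k : Fin m), C i j k = -C j i k)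
    (v w : Fin n → ℝ) (z : Fin m → ℝ) :
    contract C v w z = - contract C w v z := by
  unfold contract
  rw [Finset.sum_comm, ← Finset.sum_neg_distrib]
  refine Finset.sum_congr rfl fun j _ => ?_
  rw [← Finset.sum_neg_distrib]
  refine Finset.sum_congr rfl fun i _ => ?_
  rw [← Finset.sum_neg_distrib]
  refine Finset.sum_congr rfl fun k _ => ?_
  rw [hC i j k]; ring

lemma contract_self {n m : ℕ} (C : Fin n → Fin n → Fin m → ℝ)
    (hC : ∀ (i j : Fin n) (k : Fin m), C i j k = -C j i k)
    (v : Fin n → ℝ) (z : Fin m → ℝ) : contract C v v z = 0 := by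
  have := contract_swap C hC v v z
  linarith

lemma contract_comb {n m : ℕ} (C : Fin n → Fin n → Fin m → ℝ)
    (v₁ v₂ : Fin n → ℝ) (z : Fin m → ℝ) (c t : ℝ) :
    contract C v₁ (fun j => c * (v₂ j - t * v₁ j)) z
      = c * (contract C v₁ v₂ z - t * contract C v₁ v₁ z) := by
  unfold contract
  simp only [mul_sub, Finset.mul_sum, ← Finset.sum_sub_distrib]
  refine Finset.sum_congr rfl fun i _ => Finset.sum_congr rfl fun j _ =>
    Finset.sum_congr rfl fun k _ => by ring

lemma entry_abs_le_one {n : ℕ} (v : Fin n → ℝ) (hv : v ⬝ᵥ v = 1) (i : Fin n) :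
    |v i| ≤ 1 := by
  have h : v i * v i ≤ 1 := by
    rw [← hv]
    exact Finset.single_le_sum (f := fun j => v j * v j)
      (fun j _ => mul_self_nonneg (v j)) (Finset.mem_univ i)
  nlinarith [abs_nonneg (v i), abs_mul_abs_self (v i)]

lemma contract_bound {n m : ℕ} (C : Fin n → Fin n → Fin m → ℝ)
    (v₁ v₂ : Fin n → ℝ) (z : Fin m → ℝ)
    (h₁ : v₁ ⬝ᵥ v₁ = 1) (h₂ : v₂ ⬝ᵥ v₂ = 1) (hz : z ⬝ᵥ z = 1) :
    |contract C v₁ v₂ z| ≤ ∑ i, ∑ j, ∑ k, |C i j k| := by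
  unfold contract
  refine (Finset.abs_sum_le_sum_abs _ _).trans (Finset.sum_le_sum fun i _ => ?_)
  refine (Finset.abs_sum_le_sum_abs _ _).trans (Finset.sum_le_sum fun j _ => ?_)
  refine (Finset.abs_sum_le_sum_abs _ _).trans (Finset.sum_le_sum fun k _ => ?_)
  have b1 := entry_abs_le_one v₁ h₁ i
  have b2 := entry_abs_le_one v₂ h₂ j
  have bz := entry_abs_le_one z hz k
  calc |C i j k * v₁ i * v₂ j * z k| = |C i j k| * |v₁ i| * |v₂ j| * |z k| := by
        rw [abs_mul, abs_mul, abs_mul]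
    _ ≤ |C i j k| * 1 * 1 * 1 := by gcongr <;> positivity
    _ = |C i j k| := by ring

lemma dot_self_eq_zero' {n : ℕ} (v : Fin n → ℝ) (h : v ⬝ᵥ v = 0) : v = 0 := by
  funext i
  have h1 : ∀ j ∈ Finset.univ, (0:ℝ) ≤ v j * v j := fun j _ => mul_self_nonneg _
  have := (Finset.sum_eq_zero_iff_of_nonneg h1).mp h i (Finset.mem_univ i)
  simpa [mul_self_eq_zero] using this

lemma compress_norm {n m : ℕ} (C : Fin n → Fin n → Fin m → ℝ)
    (hC : ∀ (i j : Fin n) (k : Fin m), C i j k = -C j i k)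
    (U : Matrix (Fin n) (Fin 2) ℝ) (z : Fin m → ℝ) :
    Real.sqrt (∑ p, ∑ q, (compress C U z p q) ^ 2)
      = Real.sqrt 2 * |contract C (fun i => U i 0) (fun i => U i 1) z| := by
  have hcc : ∀ p q : Fin 2,
      compress C U z p q = contract C (fun i => U i p) (fun j => U j q) z := fun _ _ => rfl
  set a := contract C (fun i => U i 0) (fun i => U i 1) z with ha
  have e00 : compress C U z 0 0 = 0 := by rw [hcc]; exact contract_self C hC _ z
  have e11 : compress C U z 1 1 = 0 := by rw [hcc]; exact contract_self C hC _ z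
  have e01 : compress C U z 0 1 = a := rfl
  have e10 : compress C U z 1 0 = -a := by
    rw [hcc, contract_swap C hC _ _ z]
  have hsum : (∑ p, ∑ q, (compress C U z p q) ^ 2) = 2 * |a| ^ 2 := by
    simp [Fin.sum_univ_two, e00, e11, e01, e10, sq_abs]; ring
  rw [hsum, Real.sqrt_mul (by norm_num), Real.sqrt_sq (abs_nonneg a)]

theorem partial_antisym_sup_eq {n m : ℕ} (C : Fin n → Fin n → Fin m → ℝ)
    (hC : ∀ (i j : Fin n) (k : Fin m), C i j k = -C j i k) :
    sSup {r : ℝ | ∃ (U : Matrix (Fin n) (Fin 2) ℝ) (z : Fin m → ℝ),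
        Uᵀ * U = 1 ∧ z ⬝ᵥ z = 1 ∧
        r = Real.sqrt (∑ p, ∑ q, (compress C U z p q) ^ 2)}
      = Real.sqrt 2 *
        sSup {r : ℝ | ∃ (v₁ v₂ : Fin n → ℝ) (z : Fin m → ℝ),
          v₁ ⬝ᵥ v₁ = 1 ∧ v₂ ⬝ᵥ v₂ = 1 ∧ z ⬝ᵥ z = 1 ∧
          r = |contract C v₁ v₂ z|} := by
  set A := {r : ℝ | ∃ (U : Matrix (Fin n) (Fin 2) ℝ) (z : Fin m → ℝ),
        Uᵀ * U = 1 ∧ z ⬝ᵥ z = 1 ∧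
        r = Real.sqrt (∑ p, ∑ q, (compress C U z p q) ^ 2)} with hA
  set B := {r : ℝ | ∃ (v₁ v₂ : Fin n → ℝ) (z : Fin m → ℝ),
          v₁ ⬝ᵥ v₁ = 1 ∧ v₂ ⬝ᵥ v₂ = 1 ∧ z ⬝ᵥ z = 1 ∧
          r = |contract C v₁ v₂ z|} with hB
  set M := ∑ i, ∑ j, ∑ k, |C i j k| with hM
  have sqrt2_pos : (0:ℝ) < Real.sqrt 2 := Real.sqrt_pos.mpr (by norm_num)
  have keyA : ∀ r ∈ A, ∃ s ∈ B, r = Real.sqrt 2 * s := by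
    rintro r ⟨U, z, hU, hz, rfl⟩
    have hcol : ∀ p q : Fin 2,
        (fun i => U i p) ⬝ᵥ (fun i => U i q) = (1 : Matrix (Fin 2) (Fin 2) ℝ) p q := by
      intro p q
      rw [← hU]
      simp [Matrix.mul_apply, dotProduct, mul_comm]
    have h1 : (fun i => U i 0) ⬝ᵥ (fun i => U i 0) = 1 := by
      simpa [Matrix.one_apply] using hcol 0 0
    have h2 : (fun i => U i 1) ⬝ᵥ (fun i => U i 1) = 1 := by
      simpa [Matrix.one_apply] using hcol 1 1
    exact ⟨|contract C (fun i => U i 0) (fun i => U i 1) z|,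
      ⟨_, _, z, h1, h2, hz, rfl⟩, compress_norm C hC U z⟩
  have hBbd : ∀ s ∈ B, s ≤ M := by
    rintro s ⟨v₁, v₂, z, h1, h2, hz, rfl⟩
    exact contract_bound C v₁ v₂ z h1 h2 hz
  have hBbdd : BddAbove B := ⟨M, hBbd⟩
  have hBnn : ∀ s ∈ B, 0 ≤ s := by
    rintro s ⟨v₁, v₂, z, _, _, _, rfl⟩; exact abs_nonneg _
  have hAbd : ∀ r ∈ A, r ≤ Real.sqrt 2 * M := by
    intro r hr
    obtain ⟨s, hs, rfl⟩ := keyA r hr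
    exact mul_le_mul_of_nonneg_left (hBbd s hs) sqrt2_pos.le
  have hAbdd : BddAbove A := ⟨Real.sqrt 2 * M, hAbd⟩
  have hAnn : ∀ r ∈ A, 0 ≤ r := by
    rintro r ⟨U, z, _, _, rfl⟩; exact Real.sqrt_nonneg _
  have hsBnn : 0 ≤ sSup B := Real.sSup_nonneg hBnn
  have hsAnn : 0 ≤ sSup A := Real.sSup_nonneg hAnn
  have keyB : ∀ s ∈ B, Real.sqrt 2 * s ≤ sSup A := by
    rintro s ⟨v₁, v₂, z, h1, h2, hz, rfl⟩
    rcases eq_or_lt_of_le (abs_nonneg (contract C v₁ v₂ z)) with h0 | h0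
    · rw [← h0, mul_zero]; exact hsAnn
    · set a0 := contract C v₁ v₂ z with ha0
      have ha0ne : a0 ≠ 0 := abs_pos.mp h0
      set t := v₁ ⬝ᵥ v₂ with ht
      set w : Fin n → ℝ := fun j => v₂ j - t * v₁ j with hw
      have hww : w ⬝ᵥ w = 1 - t ^ 2 := by
        simp only [hw, dotProduct] at h1 h2 ht ⊢
        have expand : ∑ i, (v₂ i - t * v₁ i) * (v₂ i - t * v₁ i)
            = (∑ i, v₂ i * v₂ i) - 2 * t * (∑ i, v₁ i * v₂ i) + t ^ 2 * (∑ i, v₁ i * v₁ i) := by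
          simp only [Finset.mul_sum, ← Finset.sum_sub_distrib, ← Finset.sum_add_distrib]
          exact Finset.sum_congr rfl fun i _ => by ring
        rw [expand, h1, h2, ← ht]
        ring
      have htlt : t ^ 2 < 1 := by
        rcases lt_or_ge (t ^ 2) 1 with h | h
        · exact h
        · exfalso
          have hwnn : 0 ≤ w ⬝ᵥ w := Finset.sum_nonneg fun i _ => mul_self_nonneg _
          have hww0 : w ⬝ᵥ w = 0 := le_antisymm (by rw [hww]; linarith) hwnn
          have hw0 : w = 0 := dot_self_eq_zero' w hww0
          have hv2 : ∀ j, v₂ j = t * v₁ j := by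
            intro j
            have := congrFun hw0 j
            simp [hw] at this
            linarith
          have heq : a0 = t * contract C v₁ v₁ z := by
            rw [ha0]
            unfold contract
            rw [Finset.mul_sum]
            refine Finset.sum_congr rfl fun i _ => ?_
            rw [Finset.mul_sum]
            refine Finset.sum_congr rfl fun j _ => ?_
            rw [Finset.mul_sum]
            refine Finset.sum_congr rfl fun k _ => ?_
            rw [hv2 j]; ring
          rw [contract_self C hC v₁ z, mul_zero] at heq
          exact ha0ne heq
      have hpos : (0:ℝ) < 1 - t ^ 2 := by linarith
      set c : ℝ := 1 / Real.sqrt (1 - t ^ 2) with hc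
      have hsq : (0:ℝ) < Real.sqrt (1 - t ^ 2) := Real.sqrt_pos.mpr hpos
      have hc1 : 1 ≤ c := by
        rw [hc]
        exact one_le_one_div hsq ((Real.sqrt_le_one.mpr (by nlinarith)))
      set u₂ : Fin n → ℝ := fun j => c * (v₂ j - t * v₁ j) with hu₂
      have hu2u2 : u₂ ⬝ᵥ u₂ = 1 := by
        have he : u₂ ⬝ᵥ u₂ = c ^ 2 * (w ⬝ᵥ w) := by
          simp only [hu₂, hw, dotProduct, Finset.mul_sum]
          exact Finset.sum_congr rfl fun i _ => by ring
        rw [he, hww, hc, div_pow, one_pow, Real.sq_sqrt hpos.le]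
        field_simp
      have hv1u2 : v₁ ⬝ᵥ u₂ = 0 := by
        have he : v₁ ⬝ᵥ u₂ = c * ((v₁ ⬝ᵥ v₂) - t * (v₁ ⬝ᵥ v₁)) := by
          simp only [hu₂, dotProduct, Finset.mul_sum, mul_sub, ← Finset.sum_sub_distrib]
          exact Finset.sum_congr rfl fun i _ => by ring
        rw [he, h1, ← ht]
        ring
      set U : Matrix (Fin n) (Fin 2) ℝ :=
        Matrix.of (fun i (p : Fin 2) => if p = 0 then v₁ i else u₂ i) with hUdef
      have hcol0 : (fun i => U i 0) = v₁ := by funext i; simp [hUdef]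
      have hcol1 : (fun i => U i 1) = u₂ := by funext i; simp [hUdef]
      have hs1 : ∑ i, v₁ i * v₁ i = 1 := h1
      have hs2 : ∑ i, u₂ i * u₂ i = 1 := hu2u2
      have hs12 : ∑ i, v₁ i * u₂ i = 0 := hv1u2
      have hs21 : ∑ i, u₂ i * v₁ i = 0 := by
        rw [← hs12]; exact Finset.sum_congr rfl fun i _ => mul_comm _ _
      have hUorth : Uᵀ * U = 1 := by
        ext p q
        fin_cases p <;> fin_cases q <;>
          simp [Matrix.mul_apply, hUdef, Matrix.one_apply, hs1, hs2, hs12, hs21]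
      have haval : contract C v₁ u₂ z = c * a0 := by
        rw [hu₂, contract_comb, contract_self C hC v₁ z]
        rw [ha0]; ring
      have habs : |a0| ≤ |contract C v₁ u₂ z| := by
        rw [haval, abs_mul, abs_of_pos (by linarith : (0:ℝ) < c)]
        nlinarith [abs_nonneg a0]
      have hmem : Real.sqrt 2 * |contract C v₁ u₂ z| ∈ A := by
        refine ⟨U, z, hUorth, hz, ?_⟩
        rw [compress_norm C hC U z, hcol0, hcol1]
      calc Real.sqrt 2 * |a0| ≤ Real.sqrt 2 * |contract C v₁ u₂ z| :=
            mul_le_mul_of_nonneg_left habs sqrt2_pos.le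
        _ ≤ sSup A := le_csSup hAbdd hmem
  apply le_antisymm
  · refine Real.sSup_le (fun r hr => ?_) (by positivity)
    obtain ⟨s, hs, rfl⟩ := keyA r hr
    exact mul_le_mul_of_nonneg_left (le_csSup hBbdd hs) sqrt2_pos.le
  · have hB' : sSup B ≤ sSup A / Real.sqrt 2 := by
      refine Real.sSup_le (fun s hs => ?_) (by positivity)
      rw [le_div_iff₀ sqrt2_pos, mul_comm]
      exact keyB s hs
    calc Real.sqrt 2 * sSup B ≤ Real.sqrt 2 * (sSup A / Real.sqrt 2) :=
          mul_le_mul_of_nonneg_left hB' sqrt2_pos.le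
      _ = sSup A := by field_simp
end
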